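/- arXiv:2308.07765 — 3 statements merged into one kernel-verified Lean document; each statement's English description precedes it below -/
import Mathlib

section
/- Let n ≥ 1 and let f = Σ_α c_α x^α ∈ ℂ[x_1,…,x_n] be a nonzero polynomial with full monomial support, i.e., c_α ≠ 0 for every lattice point α ∈ Newt(f) ∩ ℕ^n. Then for every j ∈ {1,…,n}, Newt(∂f/∂x_j) = conv( ∂_j Newt(f) ∩ ℤ^n ), the convex hull of the lattice points of ∂_j Newt(f) (with the convention that the convex hull of the empty set is empty). -/
open MvPolynomial

/-- The Newton polytope of a multivariate polynomial: the convex hull (in `σ → ℝ`)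
of its exponent vectors. -/
noncomputable def Newt {σ : Type*} (f : MvPolynomial σ ℂ) : Set (σ → ℝ) :=
  convexHull ℝ ((fun (α : σ →₀ ℕ) (j : σ) => (α j : ℝ)) '' (f.support : Set (σ →₀ ℕ)))

/-- The `j`-th standard basis vector of `σ → ℝ`. -/
def stdBasis {σ : Type*} [DecidableEq σ] (j : σ) : σ → ℝ :=
  fun k => if k = j then 1 else 0

/-- The "partial derivative" `∂_j P = {α - e_j : α ∈ P, α_j ≥ 1}` of a set `P ⊆ ℝ^σ`. -/
def polyDeriv {σ : Type*} [DecidableEq σ] (j : σ) (P : Set (σ → ℝ)) : Set (σ → ℝ) :=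
  {y | ∃ α ∈ P, 1 ≤ α j ∧ y = α - stdBasis j}

/-- Label vector for the Cayley construction: `0` for `i = 0` and `e_{i-1}` otherwise. -/
def cayLabel {m : ℕ} (i : Fin (m + 1)) : Fin m → ℝ :=
  fun k => if (k : ℕ) + 1 = (i : ℕ) then 1 else 0

/-- The Cayley polytope `Cay(P_0, …, P_m) ⊆ ℝ^n × ℝ^m`, the convex hull of the union of
`P_0 × {0}` and `P_i × {e_i}` for `i = 1, …, m`. -/
noncomputable def cayley {n m : ℕ} (P : Fin (m + 1) → Set (Fin n → ℝ)) :
    Set ((Fin n ⊕ Fin m) → ℝ) :=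
  convexHull ℝ (⋃ i : Fin (m + 1), (fun p : Fin n → ℝ => Sum.elim p (cayLabel i)) '' P i)

/-- The face of `P` exposed by `v`: points of `P` minimizing `⟨·, v⟩`. -/
def exposedFace {σ : Type*} [Fintype σ] (P : Set (σ → ℝ)) (v : σ → ℝ) : Set (σ → ℝ) :=
  {x ∈ P | ∀ y ∈ P, (∑ k, x k * v k) ≤ ∑ k, y k * v k}

/-- The Lagrangian `Φ_F = f_0 - ∑ λ_i f_i` as a polynomial in the variables `x ⊕ λ`. -/
noncomputable def lagrangian {n m : ℕ} (F : Fin (m + 1) → MvPolynomial (Fin n) ℂ) :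
    MvPolynomial (Fin n ⊕ Fin m) ℂ :=
  rename Sum.inl (F 0) - ∑ i : Fin m, X (Sum.inr i) * rename Sum.inl (F i.succ)

/-- The Lagrange system `L_F = (∂Φ_F/∂x_1, …, ∂Φ_F/∂x_n, f_1, …, f_m)`,
a family of `n + m` polynomials in the `n + m` variables `x ⊕ λ`. -/
noncomputable def lagrangeSystem {n m : ℕ} (F : Fin (m + 1) → MvPolynomial (Fin n) ℂ) :
    (Fin n ⊕ Fin m) → MvPolynomial (Fin n ⊕ Fin m) ℂ :=
  Sum.elim (fun j => pderiv (Sum.inl j) (lagrangian F))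
    (fun i => rename Sum.inl (F i.succ))

/-- Admissibility of a tuple of supports `A = (A_0, …, A_m)` of finite subsets of `ℕ^n`. -/
def IsAdmissible {n m : ℕ} (A : Fin (m + 1) → Finset (Fin n → ℕ)) : Prop :=
  (∀ i, ∃ v ∈ A i,
      {w : Fin n → ℝ | ∀ α ∈ A i, (∑ j, (v j : ℝ) * w j) ≤ ∑ j, (α j : ℝ) * w j} =
        {w : Fin n → ℝ | ∀ j, 0 ≤ w j}) ∧
  (∀ i, ∀ j : Fin n, ∃ α ∈ A i, α j = 0) ∧
  (∃ j : Fin n, (fun k => if k = j then 1 else 0) ∈ A 0)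

/-- The sparse polynomial `f_i = ∑_{α ∈ A_i} c_{α,i} x^α` with support `A i` and
coefficient tuple `c`. -/
noncomputable def sparsePoly {n m : ℕ} (A : Fin (m + 1) → Finset (Fin n → ℕ))
    (c : (Σ i : Fin (m + 1), {α // α ∈ A i}) → ℂ) (i : Fin (m + 1)) :
    MvPolynomial (Fin n) ℂ :=
  ∑ α ∈ (A i).attach, c ⟨i, α⟩ • ∏ j, X j ^ ((α : Fin n → ℕ) j)

/-- The Jacobian matrix `(∂f_i/∂x_j(x))` of `F = (f_0, …, f_m)` at `x`. -/
noncomputable def jacobian {n m : ℕ} (F : Fin (m + 1) → MvPolynomial (Fin n) ℂ)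
    (x : Fin n → ℂ) : Matrix (Fin n) (Fin (m + 1)) ℂ :=
  Matrix.of fun j i => eval x (pderiv j (F i))

/-- Homogenization `f̃ = ∑_{m ∈ S} c_m ∏_r X_r^{⟨m, ρ(r)⟩ + a_r}` of
`f = ∑_{m ∈ S} c_m x^m` with respect to ray data `(ρ, a)`. -/
noncomputable def homog {n : ℕ} {R : Type*} [Fintype R]
    (ρ : R → Fin n → ℤ) (a : R → ℤ) (S : Finset (Fin n → ℕ)) (c : (Fin n → ℕ) → ℂ) :
    MvPolynomial R ℂ :=
  ∑ m ∈ S, c m • ∏ r, X r ^ ((∑ j, (m j : ℤ) * ρ r j) + a r).toNat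

/-! Both sides are convex hulls, and their generating sets coincide. Over a field of characteristic
zero, `m` is an exponent of `∂f/∂x_j` exactly when `m + e_j` is an exponent of `f`. Conversely a
lattice point `α - e_j` of `∂_j Newt(f)` is nonnegative, hence equal to some `m ∈ ℕ^n`; then
`m + e_j = α` is a lattice point of `Newt(f)`, which full support makes an exponent of `f`. -/

section

variable {σ : Type*}

theorem MvPolynomial.mem_support_pderiv_iff {R : Type*} [CommSemiring R] [NoZeroDivisors R]
    [CharZero R] (i : σ) (p : MvPolynomial σ R) (m : σ →₀ ℕ) :
    m ∈ (pderiv i p).support ↔ m + Finsupp.single i 1 ∈ p.support := by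
  simp only [mem_support_iff, coeff_pderiv, mul_ne_zero_iff, and_iff_left_iff_imp]
  exact fun _ => Nat.cast_add_one_ne_zero (m i)

theorem newt_subset_Ici_zero (f : MvPolynomial σ ℂ) : Newt f ⊆ Set.Ici 0 :=
  convexHull_min (by rintro _ ⟨α, -, rfl⟩ k; positivity) (convex_Ici 0)

theorem cast_add_single_eq_add_stdBasis [DecidableEq σ] (m : σ →₀ ℕ) (j : σ) :
    (fun k => ((m + Finsupp.single j 1 : σ →₀ ℕ) k : ℝ)) =
      (fun k => (m k : ℝ)) + stdBasis j := by
  ext k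
  by_cases hk : k = j
  · subst hk; simp [stdBasis]
  · simp [stdBasis, hk]

theorem exists_natCast_eq_of_nonneg_of_int [Finite σ] {y : σ → ℝ} (hy : 0 ≤ y)
    (hint : ∀ k, ∃ z : ℤ, y k = z) : ∃ m : σ →₀ ℕ, (fun k => (m k : ℝ)) = y := by
  choose z hz using hint
  refine ⟨Finsupp.equivFunOnFinite.symm fun k => (z k).toNat, funext fun k => ?_⟩
  have hzk : (0 : ℝ) ≤ z k := hz k ▸ hy k
  rw [Finsupp.equivFunOnFinite_symm_apply_apply, hz k]
  exact_mod_cast Int.toNat_of_nonneg (by exact_mod_cast hzk)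

theorem polyDeriv_subset_Ici_zero [DecidableEq σ] {P : Set (σ → ℝ)} (hP : P ⊆ Set.Ici 0)
    (j : σ) : polyDeriv j P ⊆ Set.Ici 0 := by
  rintro _ ⟨α, hα, hαj, rfl⟩ k
  by_cases hk : k = j
  · subst hk; simpa [stdBasis] using hαj
  · simpa [stdBasis, hk] using hP hα k

theorem image_support_pderiv_eq_lattice_points [Finite σ] [DecidableEq σ]
    {f : MvPolynomial σ ℂ}
    (hfull : ∀ α : σ →₀ ℕ, (fun j => (α j : ℝ)) ∈ Newt f → coeff α f ≠ 0) (j : σ) :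
    (fun (m : σ →₀ ℕ) (k : σ) => (m k : ℝ)) '' ((pderiv j f).support : Set (σ →₀ ℕ)) =
      {y | y ∈ polyDeriv j (Newt f) ∧ ∀ k, ∃ z : ℤ, y k = (z : ℝ)} := by
  ext y
  constructor
  · rintro ⟨m, hm, rfl⟩
    rw [Finset.mem_coe, mem_support_pderiv_iff] at hm
    refine ⟨⟨_, subset_convexHull ℝ _ ⟨_, hm, rfl⟩, by simp, ?_⟩, fun k => ⟨m k, by simp⟩⟩
    beta_reduce
    rw [cast_add_single_eq_add_stdBasis, add_sub_cancel_right]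
  · rintro ⟨hy, hint⟩
    have hy_nonneg := polyDeriv_subset_Ici_zero (newt_subset_Ici_zero f) j hy
    obtain ⟨m, rfl⟩ := exists_natCast_eq_of_nonneg_of_int hy_nonneg hint
    obtain ⟨α, hα, -, hαm⟩ := hy
    refine ⟨m, ?_, rfl⟩
    rw [Finset.mem_coe, mem_support_pderiv_iff, mem_support_iff]
    refine hfull _ ?_
    rwa [cast_add_single_eq_add_stdBasis, hαm, sub_add_cancel]

end

theorem newt_pderiv_of_full_support_general {n : ℕ} (f : MvPolynomial (Fin n) ℂ)
    (hfull : ∀ α : Fin n →₀ ℕ, (fun j => (α j : ℝ)) ∈ Newt f → coeff α f ≠ 0)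
    (j : Fin n) :
    Newt (pderiv j f) =
      convexHull ℝ {y | y ∈ polyDeriv j (Newt f) ∧ ∀ k, ∃ z : ℤ, y k = (z : ℝ)} :=
  congrArg (convexHull ℝ) (image_support_pderiv_eq_lattice_points hfull j)

/-- For a nonzero polynomial with full monomial support,
`Newt(∂f/∂x_j)` equals the convex hull of the lattice points of `∂_j Newt(f)`. -/
theorem newt_pderiv_of_full_support {n : ℕ} (hn : 1 ≤ n) (f : MvPolynomial (Fin n) ℂ)
    (hf : f ≠ 0)
    (hfull : ∀ α : Fin n →₀ ℕ, (fun j => (α j : ℝ)) ∈ Newt f → coeff α f ≠ 0)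
    (j : Fin n) :
    Newt (pderiv j f) =
      convexHull ℝ {y | y ∈ polyDeriv j (Newt f) ∧ ∀ k, ∃ z : ℤ, y k = (z : ℝ)} :=
  newt_pderiv_of_full_support_general f hfull j
end

section
/- Let P_0, P_1, …, P_m ⊆ ℝ^n be polytopes (convex hulls of nonempty finite sets) and let w ∈ ℝ^n. For each i set μ_i = min_{x ∈ P_i} ⟨x, w⟩ and let w̃ = (w, μ_0 − μ_1, …, μ_0 − μ_m) ∈ ℝ^n × ℝ^m. Then the face of the Cayley polytope Cay(P_0,…,P_m) exposed by w̃ equals the Cayley polytope of the exposed faces: Cay(P_0,…,P_m)^{w̃} = Cay(P_0^w, …, P_m^w). -/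
open MvPolynomial

/-!
Write each `P i` as the convex hull of a finite set `S i`. The minimizers of a linear functional
on a convex hull form the convex hull of its minimizers among the generators, and `Cay(P)` is the
convex hull of the lifted points `(p, e_i)`, `p ∈ S i`. On the lift of `S i` the functional `w̃`
equals `⟨·, w⟩ + μ_0 - μ_i`, whose minimum is `μ_0` for every `i`; so the minimizers of `w̃` among
all lifted points are exactly the lifts of the minimizers of `w` in the individual `S i`.
-/

open Matrix

section ExposedFace

variable {σ : Type*} [Fintype σ]

theorem mem_exposedFace {P : Set (σ → ℝ)} {v x : σ → ℝ} :
    x ∈ exposedFace P v ↔ x ∈ P ∧ ∀ y ∈ P, x ⬝ᵥ v ≤ y ⬝ᵥ v :=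
  Iff.rfl

theorem le_dotProduct_of_mem_convexHull {A : Set (σ → ℝ)} {v x : σ → ℝ} {μ : ℝ}
    (h : ∀ a ∈ A, μ ≤ a ⬝ᵥ v) (hx : x ∈ convexHull ℝ A) : μ ≤ x ⬝ᵥ v :=
  convexHull_min h
    (convex_halfSpace_ge ⟨fun a b => add_dotProduct a b v, fun c a => smul_dotProduct c a v⟩ μ)
    hx

theorem IsLeast.dotProduct_image_convexHull {A : Set (σ → ℝ)} {v : σ → ℝ} {μ : ℝ}
    (h : IsLeast ((· ⬝ᵥ v) '' A) μ) : IsLeast ((· ⬝ᵥ v) '' convexHull ℝ A) μ := by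
  obtain ⟨⟨a, ha, rfl⟩, hle⟩ := h
  refine ⟨⟨a, subset_convexHull ℝ A ha, rfl⟩, ?_⟩
  rintro _ ⟨x, hx, rfl⟩
  exact le_dotProduct_of_mem_convexHull (fun b hb => hle ⟨b, hb, rfl⟩) hx

theorem mem_exposedFace_iff_of_isLeast {B : Set (σ → ℝ)} {v x : σ → ℝ} {μ : ℝ}
    (h : IsLeast ((· ⬝ᵥ v) '' B) μ) : x ∈ exposedFace B v ↔ x ∈ B ∧ x ⬝ᵥ v = μ := by
  obtain ⟨⟨a, ha, hav⟩, hle⟩ := h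
  refine ⟨fun ⟨hx, hmin⟩ => ⟨hx, ((hmin a ha).trans_eq hav).antisymm (hle ⟨x, hx, rfl⟩)⟩, ?_⟩
  rintro ⟨hx, hxv⟩
  exact ⟨hx, fun y hy => hxv.trans_le (hle ⟨y, hy, rfl⟩)⟩

theorem Convex.exposedFace {C : Set (σ → ℝ)} (hC : Convex ℝ C) (v : σ → ℝ) :
    Convex ℝ (exposedFace C v) := by
  intro x ⟨hx, hxmin⟩ y ⟨hy, hymin⟩ a b ha hb hab
  refine ⟨hC hx hy ha hb hab, fun z hz => ?_⟩
  calc (a • x + b • y) ⬝ᵥ v = a * (x ⬝ᵥ v) + b * (y ⬝ᵥ v) := by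
        rw [add_dotProduct, smul_dotProduct, smul_dotProduct, smul_eq_mul, smul_eq_mul]
    _ ≤ a * (z ⬝ᵥ v) + b * (z ⬝ᵥ v) := by gcongr; exacts [hxmin z hz, hymin z hz]
    _ = z ⬝ᵥ v := by rw [← add_mul, hab, one_mul]

theorem exposedFace_subset_exposedFace_convexHull (A : Set (σ → ℝ)) (v : σ → ℝ) :
    exposedFace A v ⊆ exposedFace (convexHull ℝ A) v :=
  fun _ ⟨ha, hmin⟩ =>
    ⟨subset_convexHull ℝ A ha, fun _ hy => le_dotProduct_of_mem_convexHull hmin hy⟩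

theorem exposedFace_convexHull (A : Set (σ → ℝ)) (v : σ → ℝ) :
    exposedFace (convexHull ℝ A) v = convexHull ℝ (exposedFace A v) := by
  refine subset_antisymm ?_ (convexHull_min (exposedFace_subset_exposedFace_convexHull A v)
    ((convex_convexHull ℝ A).exposedFace v))
  rintro x ⟨hx, hmin⟩
  obtain ⟨ι, t, c, z, hc₀, hc₁, hz, rfl⟩ := (convexHull_eq A).subset hx
  -- `x ⬝ᵥ v` is a weighted mean of the values `z i ⬝ᵥ v ≥ x ⬝ᵥ v`, so every `z i` of positive
  -- weight attains it.
  have hval : ∀ i ∈ t, c i ≠ 0 → z i ⬝ᵥ v = t.centerMass c z ⬝ᵥ v := by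
    have hmean : ∑ i ∈ t, c i * (t.centerMass c z ⬝ᵥ v) = ∑ i ∈ t, c i * (z i ⬝ᵥ v) := by
      rw [← Finset.sum_mul, hc₁, one_mul, t.centerMass_eq_of_sum_1 _ hc₁, sum_dotProduct]
      simp_rw [smul_dotProduct, smul_eq_mul]
    intro i hi hci
    refine (mul_left_cancel₀ hci ((Finset.sum_eq_sum_iff_of_le fun j hj => ?_).1 hmean i hi)).symm
    exact mul_le_mul_of_nonneg_left (hmin _ (subset_convexHull ℝ A (hz j hj))) (hc₀ j hj)
  rw [← Finset.centerMass_filter_ne_zero]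
  refine (t.filter (c · ≠ 0)).centerMass_mem_convexHull
    (fun i hi => hc₀ i (Finset.mem_filter.1 hi).1)
    (by rw [Finset.sum_filter_ne_zero, hc₁]; exact one_pos) fun i hi => ?_
  obtain ⟨hi, hci⟩ := Finset.mem_filter.1 hi
  exact ⟨hz i hi, fun y hy => (hval i hi hci).trans_le (hmin y (subset_convexHull ℝ A hy))⟩

theorem exposedFace_iUnion {ι : Type*} {B : ι → Set (σ → ℝ)} {v : σ → ℝ} {μ : ℝ}
    (h : ∀ i, IsLeast ((· ⬝ᵥ v) '' B i) μ) :
    exposedFace (⋃ i, B i) v = ⋃ i, exposedFace (B i) v := by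
  ext x
  rw [Set.mem_iUnion]
  constructor
  · rintro ⟨hx, hmin⟩
    obtain ⟨i, hx⟩ := Set.mem_iUnion.1 hx
    obtain ⟨⟨a, ha, hav⟩, hle⟩ := h i
    exact ⟨i, (mem_exposedFace_iff_of_isLeast (h i)).2
      ⟨hx, ((hmin a (Set.mem_iUnion.2 ⟨i, ha⟩)).trans_eq hav).antisymm (hle ⟨x, hx, rfl⟩)⟩⟩
  · rintro ⟨i, hxi⟩
    obtain ⟨hx, hxv⟩ := (mem_exposedFace_iff_of_isLeast (h i)).1 hxi
    refine ⟨Set.mem_iUnion.2 ⟨i, hx⟩, fun y hy => ?_⟩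
    obtain ⟨j, hy⟩ := Set.mem_iUnion.1 hy
    exact hxv.trans_le ((h j).2 ⟨y, hy, rfl⟩)

end ExposedFace

section SumElim

variable {R α β : Type*}

def sumElimAffineMap [Ring R] (c : β → R) : (α → R) →ᵃ[R] (α ⊕ β → R) where
  toFun p := Sum.elim p c
  linear :=
    { toFun p := Sum.elim p 0
      map_add' p q := by ext (_ | _) <;> simp
      map_smul' r p := by ext (_ | _) <;> simp }
  map_vadd' p q := by ext (_ | _) <;> simp

theorem image_sumElim_convexHull [Ring R] [PartialOrder R] (c : β → R) (s : Set (α → R)) :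
    (fun p => Sum.elim p c) '' convexHull R s = convexHull R ((fun p => Sum.elim p c) '' s) :=
  (sumElimAffineMap c).image_convexHull s

variable [Fintype α] [Fintype β]

theorem exposedFace_image_sumElim (s : Set (α → ℝ)) (c d : β → ℝ) (w : α → ℝ) :
    exposedFace ((fun p => Sum.elim p c) '' s) (Sum.elim w d) =
      (fun p => Sum.elim p c) '' exposedFace s w := by
  ext x
  constructor
  · intro hx
    obtain ⟨⟨p, hp, rfl⟩, hmin⟩ := mem_exposedFace.1 hx
    refine ⟨p, mem_exposedFace.2 ⟨hp, fun q hq => ?_⟩, rfl⟩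
    simpa only [sumElim_dotProduct_sumElim, add_le_add_iff_right] using hmin _ ⟨q, hq, rfl⟩
  · rintro ⟨p, hp, rfl⟩
    obtain ⟨hp, hmin⟩ := mem_exposedFace.1 hp
    refine mem_exposedFace.2 ⟨⟨p, hp, rfl⟩, ?_⟩
    rintro _ ⟨q, hq, rfl⟩
    simpa only [sumElim_dotProduct_sumElim, add_le_add_iff_right] using hmin q hq

theorem IsLeast.image_sumElim {s : Set (α → ℝ)} {w : α → ℝ} {μ : ℝ}
    (h : IsLeast ((· ⬝ᵥ w) '' s) μ) (c d : β → ℝ) :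
    IsLeast ((· ⬝ᵥ Sum.elim w d) '' ((fun p => Sum.elim p c) '' s)) (μ + c ⬝ᵥ d) := by
  simpa [Set.image_image, sumElim_dotProduct_sumElim] using
    (monotone_id.add_const (c ⬝ᵥ d)).map_isLeast h

end SumElim

theorem cayLabel_zero {m : ℕ} : cayLabel (0 : Fin (m + 1)) = 0 := by
  ext k
  simp [cayLabel]

theorem cayLabel_succ {m : ℕ} (k : Fin m) : cayLabel k.succ = Pi.single k 1 := by
  ext j
  simp [cayLabel, Pi.single_apply, Fin.ext_iff]

theorem cayLabel_dotProduct_sub {m : ℕ} (μ : Fin (m + 1) → ℝ) (i : Fin (m + 1)) :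
    cayLabel i ⬝ᵥ (fun k => μ 0 - μ k.succ) = μ 0 - μ i := by
  cases i using Fin.cases with
  | zero => simp [cayLabel_zero]
  | succ k => simp [cayLabel_succ, single_dotProduct]

theorem cayley_convexHull {n m : ℕ} (S : Fin (m + 1) → Set (Fin n → ℝ)) :
    cayley (fun i => convexHull ℝ (S i)) =
      convexHull ℝ (⋃ i, (fun p => Sum.elim p (cayLabel i)) '' S i) := by
  simp_rw [cayley, image_sumElim_convexHull]
  exact (convexHull ℝ).closure_iSup_closure _

/-- Taking exposed faces commutes with the Cayley construction:
for `w̃ = (w, μ_0 - μ_1, …, μ_0 - μ_m)` with `μ_i = min_{x ∈ P_i} ⟨x, w⟩`, one has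
`Cay(P_0, …, P_m)^{w̃} = Cay(P_0^w, …, P_m^w)`. -/
theorem cayley_exposedFace {n m : ℕ} (P : Fin (m + 1) → Set (Fin n → ℝ))
    (hP : ∀ i, ∃ S : Finset (Fin n → ℝ), S.Nonempty ∧ P i = convexHull ℝ (S : Set (Fin n → ℝ)))
    (w : Fin n → ℝ) :
    exposedFace (cayley P)
        (Sum.elim w fun k =>
          sInf ((fun x => ∑ j, x j * w j) '' P 0) -
            sInf ((fun x => ∑ j, x j * w j) '' P k.succ)) =
      cayley (fun i => exposedFace (P i) w) := by
  choose S hSne hPS using hP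
  obtain rfl : P = fun i => convexHull ℝ (S i) := funext hPS
  set μ : Fin (m + 1) → ℝ := fun i => sInf ((· ⬝ᵥ w) '' convexHull ℝ (S i))
  have hμ : ∀ i, IsLeast ((· ⬝ᵥ w) '' (S i : Set (Fin n → ℝ))) (μ i) := by
    intro i
    obtain ⟨ν, hν⟩ := ((S i).finite_toSet.image (· ⬝ᵥ w)).isCompact.exists_isLeast
      ((hSne i).to_set.image _)
    rwa [show μ i = ν from hν.dotProduct_image_convexHull.csInf_eq]
  have hpieces : ∀ i, IsLeast ((· ⬝ᵥ Sum.elim w fun k => μ 0 - μ k.succ) ''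
      ((fun p => Sum.elim p (cayLabel i)) '' (S i : Set (Fin n → ℝ)))) (μ 0) := fun i => by
    simpa [cayLabel_dotProduct_sub] using
      (hμ i).image_sumElim (cayLabel i) (fun k => μ 0 - μ k.succ)
  calc exposedFace (cayley fun i => convexHull ℝ (S i)) (Sum.elim w fun k => μ 0 - μ k.succ)
      = convexHull ℝ (⋃ i, exposedFace ((fun p => Sum.elim p (cayLabel i)) '' (S i : Set _))
          (Sum.elim w fun k => μ 0 - μ k.succ)) := by
        rw [cayley_convexHull, exposedFace_convexHull, exposedFace_iUnion hpieces]
    _ = cayley fun i => exposedFace (convexHull ℝ (S i)) w := by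
        simp_rw [exposedFace_image_sumElim, exposedFace_convexHull, cayley_convexHull]
end

section
/- Let 1 ≤ m ≤ n and let A = (A_0, A_1, …, A_m) be an admissible tuple of finite subsets of ℕ^n. Then for generic coefficients the following holds for the sparse system F = (f_0,…,f_m) with support A: at every point x ∈ ℂ^n with f_1(x) = ⋯ = f_m(x) = 0, the n × m Jacobian matrix (∂f_i/∂x_j(x))_{1≤j≤n, 1≤i≤m} has full rank m, i.e., the gradients ∇f_1(x), …, ∇f_m(x) are linearly independent over ℂ. -/
open MvPolynomial

/-!
Fix the support `S` of `x` and an index `i₀` with `λ_{i₀} ≠ 0` in a dependence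
`∑ λ_i ∇f_i(x) = 0`, normalised to `λ_{i₀} = 1`. Admissibility puts `0` and, for every `j`, a
pure power `x_j ^ d_j` into each `A_i`. For `j ∈ S` the equation `x_j ∂_j (∑ λ_i f_i)(x) = 0`
can be solved for the coefficient of `x_j ^ d_j` in `f_{i₀}`, and afterwards `f_i(x) = 0` for
the constant term of `f_i`. Hence every such coefficient vector is the value of one rational map
in `x_S`, the `λ_i` with `i ≠ i₀` and the remaining coefficients: one parameter fewer than there
are coefficients. By a transcendence degree count the image of that map lies in a hypersurface
`G = 0`, and the product of these `G` over all `(S, i₀)` does the job.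
-/

section NormalCone

variable {σ : Type*} [Fintype σ] [DecidableEq σ] {s : Finset (σ → ℕ)}

lemma eq_zero_of_normalCone_eq_orthant {v : σ → ℕ}
    (hcone : {w : σ → ℝ | ∀ α ∈ s, ∑ j, (v j : ℝ) * w j ≤ ∑ j, (α j : ℝ) * w j} =
      {w | ∀ j, 0 ≤ w j})
    (hzero : ∀ j, ∃ α ∈ s, α j = 0) : v = 0 := by
  funext j
  obtain ⟨α, hα, hαj⟩ := hzero j
  have hej : (Pi.single j 1 : σ → ℝ) ∈ {w : σ → ℝ | ∀ k, 0 ≤ w k} := fun k => by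
    by_cases hk : k = j <;> simp [hk]
  rw [← hcone] at hej
  have : (v j : ℝ) ≤ α j := by simpa [Pi.single_apply] using hej α hα
  simpa [hαj] using this

lemma lt_sum_of_ne_single {α : σ → ℕ} {j : σ} (hα : α ≠ Pi.single j (α j)) :
    α j < ∑ k, α k := by
  obtain ⟨k, hkj, hk⟩ : ∃ k ≠ j, α k ≠ 0 := by
    by_contra! hall
    refine hα (funext fun k => ?_)
    by_cases hk : k = j
    · subst hk; simp
    · simp [hk, hall k hk]
  rw [← Finset.add_sum_erase _ _ (Finset.mem_univ j)]
  have := Finset.single_le_sum (f := α) (fun _ _ => Nat.zero_le _)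
    (Finset.mem_erase.2 ⟨hkj, Finset.mem_univ k⟩)
  omega

lemma exists_single_mem_of_normalCone_subset_orthant
    (hcone : ∀ w : σ → ℝ, (∀ α ∈ s, 0 ≤ ∑ k, (α k : ℝ) * w k) → ∀ k, 0 ≤ w k) (j : σ) :
    ∃ e ≠ 0, Pi.single j e ∈ s := by
  by_contra! hno
  set t : ℝ := ∑ α ∈ s, (α j : ℝ)
  have ht : 0 ≤ t := Finset.sum_nonneg fun _ _ => by positivity
  -- `t • 1 - (t + 1) • e_j` lies in the normal cone at `0` but not in the orthant.
  have hw : ∀ α ∈ s, 0 ≤ ∑ k, (α k : ℝ) * (t - (t + 1) * (Pi.single j 1 : σ → ℝ) k) := by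
    intro α hα
    have hpair : ∑ k, (α k : ℝ) * (t - (t + 1) * (Pi.single j 1 : σ → ℝ) k) =
        (∑ k, (α k : ℝ)) * t - (t + 1) * α j := by
      simp [mul_sub, Finset.sum_sub_distrib, Finset.sum_mul, Pi.single_apply]
      ring
    have htα : (α j : ℝ) ≤ t :=
      Finset.single_le_sum (f := fun α => (α j : ℝ)) (fun _ _ => by positivity) hα
    rw [hpair]
    by_cases hsingle : α = Pi.single j (α j)
    · have hαj : α j = 0 := by_contra fun h => hno _ h (hsingle ▸ hα)
      rw [hαj, Nat.cast_zero, mul_zero, sub_zero]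
      positivity
    · have : (α j : ℝ) + 1 ≤ ∑ k, (α k : ℝ) := by
        exact_mod_cast lt_sum_of_ne_single hsingle
      nlinarith
  have := hcone _ hw j
  norm_num at this

end NormalCone

namespace IsAdmissible

variable {n m : ℕ} {A : Fin (m + 1) → Finset (Fin n → ℕ)}

lemma zero_mem (hA : IsAdmissible A) (i : Fin (m + 1)) : (0 : Fin n → ℕ) ∈ A i := by
  obtain ⟨v, hv, hcone⟩ := hA.1 i
  rwa [← eq_zero_of_normalCone_eq_orthant hcone (hA.2.1 i)]

lemma exists_single_mem (hA : IsAdmissible A) (i : Fin (m + 1)) (j : Fin n) :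
    ∃ e ≠ 0, Pi.single j e ∈ A i := by
  obtain ⟨v, -, hcone⟩ := hA.1 i
  obtain rfl := eq_zero_of_normalCone_eq_orthant hcone (hA.2.1 i)
  refine exists_single_mem_of_normalCone_subset_orthant (fun w hw => ?_) j
  change w ∈ {w : Fin n → ℝ | ∀ j, 0 ≤ w j}
  rw [← hcone]
  simpa using hw

end IsAdmissible

open Cardinal in
theorem exists_ne_zero_eval_liftAlgHom_eq_zero_of_card_lt {Y κ : Type*} [Fintype Y] [Fintype κ]
    (h : Fintype.card Y < Fintype.card κ) {q : MvPolynomial Y ℂ} (hq : q ≠ 0)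
    (φ : κ → Localization.Away q) :
    ∃ G : MvPolynomial κ ℂ, G ≠ 0 ∧ ∀ (y : Y → ℂ) (hy : IsUnit (aeval y q)),
      eval (fun k => IsLocalization.Away.liftAlgHom q hy (φ k)) G = 0 := by
  have : IsDomain (Localization.Away q) := IsLocalization.Away.isDomain _ hq
  have : FaithfulSMul (MvPolynomial Y ℂ) (Localization.Away q) :=
    (faithfulSMul_iff_algebraMap_injective _ _).2
      (IsLocalization.injective _ (powers_le_nonZeroDivisors_of_noZeroDivisors hq))
  have : Algebra.IsAlgebraic (MvPolynomial Y ℂ) (Localization.Away q) :=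
    IsLocalization.isAlgebraic _ (Submonoid.powers q)
  have htrdeg : Algebra.trdeg ℂ (Localization.Away q) = #Y := by
    rw [← trdeg_add_eq ℂ (MvPolynomial Y ℂ), MvPolynomial.trdeg_of_isDomain,
      trdeg_eq_zero, add_zero, lift_uzero]
  have hdep : ¬ AlgebraicIndependent ℂ φ := fun hind => by
    have := hind.lift_cardinalMk_le_trdeg
    rw [htrdeg, mk_fintype, mk_fintype, lift_natCast, lift_natCast, Nat.cast_le] at this
    omega
  obtain ⟨G, hφG, hG⟩ : ∃ G, aeval φ G = 0 ∧ G ≠ 0 := by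
    simpa [AlgebraicIndependent, injective_iff_map_eq_zero] using hdep
  refine ⟨G, hG, fun y hy => ?_⟩
  rw [← coe_aeval_eq_eval, RingHom.coe_coe, ← comp_aeval_apply, hφG, map_zero]

lemma prod_X_pow_eq_monomial_equivFunOnFinite {σ R : Type*} [Fintype σ] [CommSemiring R]
    (α : σ → ℕ) :
    ∏ l, (X l : MvPolynomial σ R) ^ α l = monomial (Finsupp.equivFunOnFinite.symm α) 1 := by
  rw [monomial_eq, map_one, one_mul, Finsupp.prod_fintype _ _ fun _ => pow_zero _]
  rfl

lemma X_mul_pderiv_prod_X_pow {σ R : Type*} [Fintype σ] [CommSemiring R] (α : σ → ℕ) (j : σ) :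
    X j * pderiv j (∏ l, (X l : MvPolynomial σ R) ^ α l) = α j • ∏ l, X l ^ α l := by
  rw [prod_X_pow_eq_monomial_equivFunOnFinite, X_mul_pderiv_monomial]
  rfl

section SparseSystem

variable {n m : ℕ} (A : Fin (m + 1) → Finset (Fin n → ℕ))

abbrev CoeffIdx := Σ i : Fin (m + 1), {α // α ∈ A i}

variable {A} {T : Type*} [CommRing T]

lemma eval_sparsePoly (c : CoeffIdx A → ℂ) (i : Fin (m + 1)) (x : Fin n → ℂ) :
    eval x (sparsePoly A c i) = ∑ α ∈ (A i).attach, c ⟨i, α⟩ * ∏ l, x l ^ α.1 l := by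
  simp [sparsePoly]

lemma mul_eval_pderiv_sparsePoly (c : CoeffIdx A → ℂ) (i : Fin (m + 1)) (x : Fin n → ℂ)
    (j : Fin n) :
    x j * eval x (pderiv j (sparsePoly A c i)) =
      ∑ α ∈ (A i).attach, c ⟨i, α⟩ * α.1 j * ∏ l, x l ^ α.1 l := by
  simp only [sparsePoly, map_sum, Finset.mul_sum, Derivation.map_smul]
  refine Finset.sum_congr rfl fun α _ => ?_
  rw [← eval_X (f := x) j, ← map_mul, mul_smul_comm, X_mul_pderiv_prod_X_pow]
  simp [mul_assoc]

/-- The coefficient of `c k` in `f_{i+1}(x)`. -/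
def evalWeight (x : Fin n → T) (i : Fin m) (k : CoeffIdx A) : T :=
  if k.1 = i.succ then ∏ l, x l ^ k.2.1 l else 0

/-- The coefficient of `c k` in `x_j ∂_j (∑ w_i f_i)(x)`. -/
def eulerWeight (w : Fin (m + 1) → T) (x : Fin n → T) (j : Fin n) (k : CoeffIdx A) : T :=
  w k.1 * (k.2.1 j : T) * ∏ l, x l ^ k.2.1 l

lemma sum_evalWeight_mul (c : CoeffIdx A → ℂ) (x : Fin n → ℂ) (i : Fin m) :
    ∑ k, evalWeight x i k * c k = eval x (sparsePoly A c i.succ) := by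
  simp [Fintype.sum_sigma, evalWeight, eval_sparsePoly, Finset.univ_eq_attach, mul_comm]

lemma sum_eulerWeight_mul (c : CoeffIdx A → ℂ) (x : Fin n → ℂ) (lam : Fin m → ℂ) (j : Fin n) :
    ∑ k, eulerWeight (Fin.cons 0 lam) x j k * c k =
      x j * ∑ i, lam i * eval x (pderiv j (sparsePoly A c i.succ)) := by
  simp only [Fintype.sum_sigma, Fin.sum_univ_succ, eulerWeight, Fin.cons_zero, Fin.cons_succ,
    zero_mul, Finset.sum_const_zero, zero_add, Finset.mul_sum, mul_left_comm (x j),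
    mul_eval_pderiv_sparsePoly, Finset.univ_eq_attach]
  refine Finset.sum_congr rfl fun i _ => Finset.sum_congr rfl fun α _ => ?_
  ring

end SparseSystem

section Elimination

variable {n m : ℕ} {A : Fin (m + 1) → Finset (Fin n → ℕ)}
  (h0 : ∀ i, (0 : Fin n → ℕ) ∈ A i) (i0 : Fin m) {d : Fin n → ℕ}
  (hmem : ∀ j, Pi.single j (d j) ∈ A i0.succ) (S : Finset (Fin n))

def elimIdx : S ⊕ Fin m → CoeffIdx A :=
  Sum.elim (fun j => ⟨i0.succ, Pi.single j.1 (d j), hmem j⟩) (fun i => ⟨i.succ, 0, h0 i.succ⟩)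

lemma elimIdx_injective (hd : ∀ j, d j ≠ 0) : Function.Injective (elimIdx h0 i0 hmem S) := by
  have hexp : ∀ {k k' : CoeffIdx A}, k = k' → k.2.1 = k'.2.1 := fun h => h ▸ rfl
  rintro (j | i) (j' | i') h <;> have h' := hexp h <;>
    simp only [elimIdx, Sum.elim_inl, Sum.elim_inr] at h h'
  · obtain rfl : j = j' := by
      by_contra hne
      simpa [hd, Subtype.coe_ne_coe.2 (Ne.symm hne)] using congrFun h' j
    rfl
  · simpa [hd] using congrFun h' j
  · simpa [hd] using (congrFun h' j').symm
  · exact congrArg _ (Fin.succ_injective _ (congrArg Sigma.fst h))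

abbrev FreeIdx := {k : CoeffIdx A // k ∉ Set.range (elimIdx h0 i0 hmem S)}

noncomputable def coeffEquiv (hd : ∀ j, d j ≠ 0) :
    (S ⊕ Fin m) ⊕ FreeIdx h0 i0 hmem S ≃ CoeffIdx A :=
  (Equiv.sumCongr (Equiv.ofInjective _ (elimIdx_injective h0 i0 hmem S hd)) (Equiv.refl _)).trans
    (Equiv.sumCompl _)

lemma card_lt_card_coeffIdx (hd : ∀ j, d j ≠ 0) :
    Fintype.card (S ⊕ ({i // i ≠ i0} ⊕ FreeIdx h0 i0 hmem S)) < Fintype.card (CoeffIdx A) := by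
  rw [← Fintype.card_congr (coeffEquiv h0 i0 hmem S hd)]
  simp only [Fintype.card_sum, Fintype.card_subtype_compl, Fintype.card_fin,
    Fintype.card_subtype_eq]
  have := i0.pos
  omega

lemma sum_coeffIdx_split (hd : ∀ j, d j ≠ 0) {M : Type*} [AddCommMonoid M] (g : CoeffIdx A → M) :
    ∑ k, g k = ∑ j : S, g (elimIdx h0 i0 hmem S (.inl j)) +
      ∑ i, g (elimIdx h0 i0 hmem S (.inr i)) + ∑ k : FreeIdx h0 i0 hmem S, g k := by
  rw [← (coeffEquiv h0 i0 hmem S hd).sum_comp]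
  simp [coeffEquiv, Fintype.sum_sum_type]

variable {T : Type*} [CommRing T] (x : Fin n → T)

lemma eulerWeight_elimIdx_inl (w : Fin (m + 1) → T) (j : Fin n) (j' : S) :
    eulerWeight w x j (elimIdx h0 i0 hmem S (.inl j')) =
      w i0.succ * ((Pi.single (j' : Fin n) (d j') : Fin n → ℕ) j : T) * x j' ^ d j' := by
  simp [eulerWeight, elimIdx, Pi.single_apply]

lemma eulerWeight_elimIdx_inr (w : Fin (m + 1) → T) (j : Fin n) (i : Fin m) :
    eulerWeight w x j (elimIdx h0 i0 hmem S (.inr i)) = 0 := by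
  simp [eulerWeight, elimIdx]

lemma evalWeight_elimIdx_inr (i i' : Fin m) :
    evalWeight x i (elimIdx h0 i0 hmem S (.inr i')) = if i' = i then 1 else 0 := by
  simp [evalWeight, elimIdx]

end Elimination

noncomputable section Reconstruction

variable {n m : ℕ} {A : Fin (m + 1) → Finset (Fin n → ℕ)}
  (h0 : ∀ i, (0 : Fin n → ℕ) ∈ A i) (i0 : Fin m) {d : Fin n → ℕ}
  (hmem : ∀ j, Pi.single j (d j) ∈ A i0.succ) (S : Finset (Fin n))
  {T T' : Type*} [CommRing T] [Algebra ℂ T] [CommRing T'] [Algebra ℂ T']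

/-- The coefficient of `x_j ^ d_j` in `f_{i0+1}` as forced by `x_j ∂_j (∑ w_i f_i)(x) = 0`,
provided `w_{i0+1} = 1` and `u_j = x_j⁻¹`. -/
def solvePureCoeff (x : Fin n → T) (u : S → T) (w : Fin (m + 1) → T)
    (c : FreeIdx h0 i0 hmem S → T) (j : S) : T :=
  -((d j : ℂ)⁻¹ • (u j ^ d j * ∑ k, eulerWeight w x j k.1 * c k))

def reconstructCoeffs (x : Fin n → T) (u : S → T) (w : Fin (m + 1) → T)
    (c : FreeIdx h0 i0 hmem S → T) : (S ⊕ Fin m) ⊕ FreeIdx h0 i0 hmem S → T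
  | .inr k => c k
  | .inl (.inl j) => solvePureCoeff h0 i0 hmem S x u w c j
  | .inl (.inr i) => -(∑ k, evalWeight x i k.1 * c k +
      ∑ j, evalWeight x i (elimIdx h0 i0 hmem S (.inl j)) * solvePureCoeff h0 i0 hmem S x u w c j)

lemma map_reconstructCoeffs (f : T →ₐ[ℂ] T') (x : Fin n → T) (u : S → T)
    (w : Fin (m + 1) → T) (c : FreeIdx h0 i0 hmem S → T)
    (z : (S ⊕ Fin m) ⊕ FreeIdx h0 i0 hmem S) :
    f (reconstructCoeffs h0 i0 hmem S x u w c z) =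
      reconstructCoeffs h0 i0 hmem S (f ∘ x) (f ∘ u) (f ∘ w) (f ∘ c) z := by
  rcases z with (j | i) | k <;>
    simp [reconstructCoeffs, solvePureCoeff, evalWeight, eulerWeight, map_sum, apply_ite f]

lemma reconstructCoeffs_eq (hd : ∀ j, d j ≠ 0) (x : Fin n → ℂ) (w : Fin (m + 1) → ℂ)
    (c : CoeffIdx A → ℂ) (hw : w i0.succ = 1) (hx : ∀ j ∈ S, x j ≠ 0)
    (hval : ∀ i, ∑ k, evalWeight x i k * c k = 0)
    (heuler : ∀ j ∈ S, ∑ k, eulerWeight w x j k * c k = 0)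
    (z : (S ⊕ Fin m) ⊕ FreeIdx h0 i0 hmem S) :
    reconstructCoeffs h0 i0 hmem S x (fun j => (x j)⁻¹) w (fun k => c k) z =
      c (coeffEquiv h0 i0 hmem S hd z) := by
  have hpure (j : S) : solvePureCoeff h0 i0 hmem S x (fun j => (x j)⁻¹) w (fun k => c k) j =
      c (elimIdx h0 i0 hmem S (.inl j)) := by
    have h := heuler j j.2
    rw [sum_coeffIdx_split h0 i0 hmem S hd, Finset.sum_eq_single j (fun j' _ hj' => by
      simp [eulerWeight_elimIdx_inl, Subtype.coe_ne_coe.2 hj']) (by simp)] at h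
    simp only [eulerWeight_elimIdx_inl, eulerWeight_elimIdx_inr, hw, Pi.single_eq_same, zero_mul,
      Finset.sum_const_zero, add_zero, one_mul] at h
    have hxj := hx j j.2
    have hdj : (d j : ℂ) ≠ 0 := Nat.cast_ne_zero.2 (hd j)
    rw [solvePureCoeff, eq_neg_of_add_eq_zero_right h, smul_eq_mul, inv_pow]
    field_simp
  rcases z with (j | i) | k
  · exact hpure j
  · have h := hval i
    rw [sum_coeffIdx_split h0 i0 hmem S hd] at h
    simp only [evalWeight_elimIdx_inr, ite_mul, one_mul, zero_mul, Finset.sum_ite_eq',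
      Finset.mem_univ, if_true] at h
    simp only [reconstructCoeffs, hpure, coeffEquiv, Equiv.trans_apply, Equiv.sumCongr_apply,
      Sum.map_inl, Equiv.ofInjective_apply, Equiv.sumCompl_apply_inl]
    linear_combination -h
  · rfl

end Reconstruction

theorem exists_ne_zero_eval_eq_zero_of_gradients_dependent {n m : ℕ}
    {A : Fin (m + 1) → Finset (Fin n → ℕ)} (h0 : ∀ i, (0 : Fin n → ℕ) ∈ A i) (i0 : Fin m)
    {d : Fin n → ℕ} (hd : ∀ j, d j ≠ 0) (hmem : ∀ j, Pi.single j (d j) ∈ A i0.succ)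
    (S : Finset (Fin n)) :
    ∃ G : MvPolynomial (CoeffIdx A) ℂ, G ≠ 0 ∧
      ∀ (c : CoeffIdx A → ℂ) (x : Fin n → ℂ) (lam : Fin m → ℂ), lam i0 = 1 →
        (∀ j, x j ≠ 0 ↔ j ∈ S) → (∀ i : Fin m, eval x (sparsePoly A c i.succ) = 0) →
        (∀ j, ∑ i : Fin m, lam i * eval x (pderiv j (sparsePoly A c i.succ)) = 0) →
        eval c G = 0 := by
  let Y := S ⊕ ({i : Fin m // i ≠ i0} ⊕ FreeIdx h0 i0 hmem S)
  let Δ : MvPolynomial Y ℂ := ∏ j : S, X (.inl j)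
  let ι := algebraMap (MvPolynomial Y ℂ) (Localization.Away Δ)
  have hunit (j : S) : IsUnit (ι (X (.inl j))) := IsLocalization.Away.isUnit_of_dvd Δ
    (Finset.dvd_prod_of_mem (fun j : S => (X (.inl j) : MvPolynomial Y ℂ)) (Finset.mem_univ j))
  let xgen : Fin n → Localization.Away Δ := fun l =>
    if h : l ∈ S then ι (X (.inl ⟨l, h⟩)) else 0
  let ugen : S → Localization.Away Δ := fun j => ↑(hunit j).unit⁻¹
  let wgen : Fin (m + 1) → Localization.Away Δ :=
    Fin.cons 0 fun i => if h : i = i0 then 1 else ι (X (.inr (.inl ⟨i, h⟩)))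
  let cgen : FreeIdx h0 i0 hmem S → Localization.Away Δ := fun k => ι (X (.inr (.inr k)))
  obtain ⟨G, hG, hGφ⟩ := exists_ne_zero_eval_liftAlgHom_eq_zero_of_card_lt
    (card_lt_card_coeffIdx h0 i0 hmem S hd) (Finset.prod_ne_zero_iff.2 fun j _ => X_ne_zero _)
    fun k => reconstructCoeffs h0 i0 hmem S xgen ugen wgen cgen
      ((coeffEquiv h0 i0 hmem S hd).symm k)
  refine ⟨G, hG, fun c x lam hlam hS hval hgrad => ?_⟩
  let y : Y → ℂ := Sum.elim (fun j => x j) (Sum.elim (fun i => lam i) (fun k => c k))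
  have hy : IsUnit (aeval y Δ) := by
    simpa [Δ, y, Finset.prod_ne_zero_iff] using fun j hj => (hS j).2 hj
  set ev := IsLocalization.Away.liftAlgHom (S := Localization.Away Δ) Δ hy
  have hev (p : MvPolynomial Y ℂ) : ev (ι p) = aeval y p := IsLocalization.Away.lift_eq Δ hy p
  have hx : ev ∘ xgen = x := by
    funext l
    by_cases hl : l ∈ S
    · simp [xgen, hl, hev, y]
    · simpa [xgen, hl, eq_comm] using mt (hS l).1 hl
  have hu : ev ∘ ugen = fun j : S => (x j)⁻¹ := by
    funext j
    simp [ugen, map_units_inv, hev, y]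
  have hw : ev ∘ wgen = Fin.cons 0 lam := by
    funext i
    refine Fin.cases (by simp [wgen]) (fun i => ?_) i
    by_cases hi : i = i0 <;> simp [wgen, hi, hlam, hev, y]
  have hc : ev ∘ cgen = fun k : FreeIdx h0 i0 hmem S => c k := by
    funext k
    simp [cgen, hev, y]
  convert hGφ y hy with k
  rw [map_reconstructCoeffs, hx, hu, hw, hc, reconstructCoeffs_eq h0 i0 hmem S hd x _ c
    (by simpa using hlam) (fun j hj => (hS j).2 hj) (fun i => by rw [sum_evalWeight_mul, hval])
    (fun j _ => by rw [sum_eulerWeight_mul, hgrad, mul_zero]), Equiv.apply_symm_apply]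

theorem jacobian_full_rank_on_variety_general {n m : ℕ}
    (A : Fin (m + 1) → Finset (Fin n → ℕ)) (hA : IsAdmissible A) :
    ∃ G : MvPolynomial (Σ i : Fin (m + 1), {α // α ∈ A i}) ℂ, G ≠ 0 ∧
      ∀ c : (Σ i : Fin (m + 1), {α // α ∈ A i}) → ℂ, eval c G ≠ 0 →
        ∀ x : Fin n → ℂ, (∀ i : Fin m, eval x (sparsePoly A c i.succ) = 0) →
          (Matrix.of fun (j : Fin n) (i : Fin m) =>
              eval x (pderiv j (sparsePoly A c i.succ))).rank = m ∧
            LinearIndependent ℂ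
              (fun (i : Fin m) (j : Fin n) => eval x (pderiv j (sparsePoly A c i.succ))) := by
  choose d hd hmem using fun (i0 : Fin m) => hA.exists_single_mem i0.succ
  choose G hG hGvan using fun (S : Finset (Fin n)) (i0 : Fin m) =>
    exists_ne_zero_eval_eq_zero_of_gradients_dependent hA.zero_mem i0 (hd i0) (hmem i0) S
  refine ⟨∏ S, ∏ i0, G S i0, Finset.prod_ne_zero_iff.2 fun S _ =>
    Finset.prod_ne_zero_iff.2 fun i0 _ => hG S i0, fun c hc x hvan => ?_⟩
  have hind : LinearIndependent ℂ
      (fun (i : Fin m) (j : Fin n) => eval x (pderiv j (sparsePoly A c i.succ))) := by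
    rw [Fintype.linearIndependent_iff]
    by_contra! ⟨g, hg, i0, hi0⟩
    refine hc ?_
    simp only [map_prod]
    refine Finset.prod_eq_zero (Finset.mem_univ {j | x j ≠ 0}.toFinset) <|
      Finset.prod_eq_zero (Finset.mem_univ i0) <| hGvan _ i0 c x (fun i => g i / g i0)
        (div_self hi0) (by simp) hvan fun j => ?_
    have := congrFun hg j
    simp only [Finset.sum_apply, Pi.smul_apply, smul_eq_mul, Pi.zero_apply] at this
    simp [div_mul_eq_mul_div, ← Finset.sum_div, this]
  refine ⟨?_, hind⟩
  rw [Matrix.rank_eq_finrank_span_cols]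
  exact (finrank_span_eq_card hind).trans (Fintype.card_fin m)

/-- For an admissible support tuple, generically at every point of the
variety `f_1 = ⋯ = f_m = 0` the `n × m` Jacobian `(∂f_i/∂x_j)` has full rank `m`,
i.e. the gradients `∇f_1, …, ∇f_m` are linearly independent. -/
theorem jacobian_full_rank_on_variety {n m : ℕ} (hm : 1 ≤ m) (hmn : m ≤ n)
    (A : Fin (m + 1) → Finset (Fin n → ℕ)) (hA : IsAdmissible A) :
    ∃ G : MvPolynomial (Σ i : Fin (m + 1), {α // α ∈ A i}) ℂ, G ≠ 0 ∧
      ∀ c : (Σ i : Fin (m + 1), {α // α ∈ A i}) → ℂ, eval c G ≠ 0 →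
        ∀ x : Fin n → ℂ, (∀ i : Fin m, eval x (sparsePoly A c i.succ) = 0) →
          (Matrix.of fun (j : Fin n) (i : Fin m) =>
              eval x (pderiv j (sparsePoly A c i.succ))).rank = m ∧
            LinearIndependent ℂ
              (fun (i : Fin m) (j : Fin n) => eval x (pderiv j (sparsePoly A c i.succ))) :=
  jacobian_full_rank_on_variety_general A hA
end
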